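/- arXiv:1901.01117 — 3 statements merged into one kernel-verified Lean document; each statement's English description precedes it below -/
import Mathlib

section
/- Let κ be a regular cardinal and let F be a coherent (κ⁺, λ, κ)-forest of < κ-to-1 functions, closed under < κ modifications. Then F does not have the κ⁺-chain condition: there is an antichain in F of size κ⁺. Moreover, F is Aronszajn: F contains no ⊆-well-ordered chain of order type κ⁺. -/
/-
Antichain: along an injection `x : κ⁺ → X`, pick for each `α < κ⁺` a member of `F` with domain
`x[≤ α]` and modify it at `< κ` points so that its fiber over a fixed value `y₀` is exactly
`{x α}`. For `β < α` the `α`-th and `β`-th functions then disagree at `x β`.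

Aronszajn: along a strictly increasing chain of length `κ⁺` each successor step adds a new
point `t i` to the domain. By pigeonhole, `κ⁺` of these points share a value `y`; `κ` of them
enter the chain below some stage `j` by regularity of `κ⁺`, so the fiber of the `j`-th function
over `y` has size `κ`.
-/

open Cardinal Set
open scoped Classical

universe u v

namespace ForestPaper

variable {X : Type u} {μ : Type v}

/-- The domain of a partial function represented as an `Option`-valued function. -/
def pdom (f : X → Option μ) : Set X := {x | f x ≠ none}

/-- The range of a partial function. -/
def pran (f : X → Option μ) : Set μ := {y | ∃ x, f x = some y}

/-- `Ext g f` means the partial function `g` extends `f`. -/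
def Ext (g f : X → Option μ) : Prop := ∀ x, f x ≠ none → g x = f x

/-- Restriction of a partial function to a set. -/
noncomputable def pres (f : X → Option μ) (z : Set X) : X → Option μ :=
  fun x => if x ∈ z then f x else none

/-- The set of points of the common domain where `f` and `g` disagree. -/
def pdiff (f g : X → Option μ) : Set X :=
  {x | f x ≠ none ∧ g x ≠ none ∧ f x ≠ g x}

/-- `f` and `g` agree on their common domain. -/
def Agree (f g : X → Option μ) : Prop :=
  ∀ x, f x ≠ none → g x ≠ none → f x = g x

/-- Two members of `F` are compatible if they have a common extension in `F`. -/
def Compat (F : Set (X → Option μ)) (f g : X → Option μ) : Prop :=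
  ∃ h ∈ F, Ext h f ∧ Ext h g

/-- `A` is an antichain in `F`: a pairwise incompatible subset of `F`. -/
def IsAntichainIn (F A : Set (X → Option μ)) : Prop :=
  A ⊆ F ∧ ∀ f ∈ A, ∀ g ∈ A, f ≠ g → ¬ Compat F f g

/-- `A` is a maximal antichain in `F`. -/
def IsMaxAntichainIn (F A : Set (X → Option μ)) : Prop :=
  IsAntichainIn F A ∧ ∀ f ∈ F, ∃ g ∈ A, Compat F f g

/-- A `(c, X, μ)`-forest: a collection of partial functions from `X` to `μ` whose
domains are exactly the subsets of `X` of size `< c`, with coherent restrictions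
between levels (every restriction of a member is a member, and every member
extends to any larger admissible domain). -/
structure IsForest (c : Cardinal.{u}) (F : Set (X → Option μ)) : Prop where
  dom_small : ∀ f ∈ F, #(pdom f) < c
  exists_dom : ∀ z : Set X, #z < c → ∃ f ∈ F, pdom f = z
  restrict_mem : ∀ f ∈ F, ∀ z : Set X, z ⊆ pdom f → pres f z ∈ F
  extend_mem : ∀ f ∈ F, ∀ z : Set X, #z < c → pdom f ⊆ z →
    ∃ g ∈ F, pdom g = z ∧ Ext g f

/-- A family is `κ`-coherent when any two members disagree at `< κ` many points
of their common domain. -/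
def Coherent (κ : Cardinal.{u}) (F : Set (X → Option μ)) : Prop :=
  ∀ f ∈ F, ∀ g ∈ F, #(pdiff f g) < κ

/-- `F` is closed under modifications at `< κ` many points. -/
def ClosedMod (κ : Cardinal.{u}) (F : Set (X → Option μ)) : Prop :=
  ∀ f ∈ F, ∀ f' : X → Option μ, pdom f' = pdom f →
    #{x | f x ≠ f' x} < κ → f' ∈ F

/-- A partial function is injective (on its domain). -/
def PInj (f : X → Option μ) : Prop :=
  ∀ x y, f x ≠ none → f x = f y → x = y

/-- A partial function is `< κ`-to-1: every fiber has size `< κ`. -/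
def SmallTo1 (κ : Cardinal.{u}) (f : X → Option μ) : Prop :=
  ∀ y : μ, #{x | f x = some y} < κ

/-- `F` contains a `⊆`-well-ordered chain of order type `o`. -/
def HasChain (o : Ordinal.{u}) (F : Set (X → Option μ)) : Prop :=
  ∃ c : o.ToType → (X → Option μ), (∀ i, c i ∈ F) ∧
    ∀ i j, i < j → Ext (c j) (c i) ∧ c i ≠ c j

open Function Order

variable {F : Set (X → Option μ)} {f g : X → Option μ}

theorem Agree.symm (h : Agree f g) : Agree g f :=
  fun x hg hf => (h x hf hg).symm

theorem Compat.agree (h : Compat F f g) : Agree f g := by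
  obtain ⟨k, -, hkf, hkg⟩ := h
  intro x hf hg
  rw [← hkf x hf, hkg x hg]

theorem Ext.exists_new_point (hgf : Ext g f) (hne : f ≠ g) : ∃ x, g x ≠ none ∧ f x = none := by
  by_contra! h
  refine hne (funext fun x => ?_)
  by_cases hf : f x = none
  · rw [hf, not_not.mp (mt (h x) (not_not.mpr hf))]
  · exact (hgf x hf).symm

theorem injective_of_pairwise_not_agree {ι : Type*} {f : ι → X → Option μ}
    (hf : Pairwise fun i j => ¬ Agree (f i) (f j)) : Injective f :=
  fun _ _ hij => by_contra fun h => hf h (hij ▸ fun _ _ _ => rfl)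

theorem isAntichainIn_range {ι : Type*} {f : ι → X → Option μ} (hfF : ∀ i, f i ∈ F)
    (hf : Pairwise fun i j => ¬ Agree (f i) (f j)) : IsAntichainIn F (range f) := by
  refine ⟨range_subset_iff.2 hfF, ?_⟩
  rintro _ ⟨i, rfl⟩ _ ⟨j, rfl⟩ hij hc
  exact hf (ne_of_apply_ne f hij) hc.agree

theorem ClosedMod.exists_fiber_eq_singleton {κ : Cardinal.{u}} (hκ : ℵ₀ ≤ κ)
    (hmod : ClosedMod κ F) (hf : f ∈ F) {y₀ y₁ : μ} (hy : y₁ ≠ y₀)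
    (hfib : #{x | f x = some y₀} < κ) {a : X} (ha : f a ≠ none) :
    ∃ g ∈ F, pdom g = pdom f ∧ ∀ x, g x = some y₀ ↔ x = a := by
  set g : X → Option μ := fun x => if x = a then some y₀ else if f x = some y₀ then some y₁ else f x
  have hdom : pdom g = pdom f := by
    ext x
    by_cases hxa : x = a
    · subst hxa; simpa [pdom, g] using ha
    · by_cases hx : f x = some y₀ <;> simp [pdom, g, hxa, hx]
  have hdiff : {x | f x ≠ g x} ⊆ insert a {x | f x = some y₀} := by
    intro x hx
    by_contra h
    simp only [mem_insert_iff, mem_ofPred_eq, not_or] at h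
    exact hx (by simp [g, h.1, h.2])
  have hsmall : #{x | f x ≠ g x} < κ :=
    (mk_le_mk_of_subset hdiff).trans_lt <| mk_insert_le.trans_lt <|
      add_lt_of_lt hκ hfib (one_lt_aleph0.trans_le hκ)
  refine ⟨g, hmod f hf g hdom hsmall, hdom, fun x => ?_⟩
  by_cases hxa : x = a
  · simp [g, hxa]
  · by_cases hx : f x = some y₀ <;> simp [g, hxa, hx, hy]

theorem exists_antichain_of_embedding {c κ : Cardinal.{u}} {ι : Type u} [LinearOrder ι]
    [Nontrivial μ] (hκ : ℵ₀ ≤ κ) (hF : IsForest c F) (hmod : ClosedMod κ F)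
    (hto1 : ∀ f ∈ F, SmallTo1 κ f) (x : ι ↪ X) (hι : ∀ i : ι, #(Iic i) < c) :
    ∃ f : ι → X → Option μ, Injective f ∧ IsAntichainIn F (range f) := by
  obtain ⟨y₀, y₁, hy⟩ := exists_pair_ne μ
  have hmarked : ∀ i, ∃ f ∈ F, pdom f = x '' Iic i ∧ ∀ t, f t = some y₀ ↔ t = x i := by
    intro i
    obtain ⟨g, hgF, hg⟩ := hF.exists_dom _ (mk_image_le.trans_lt (hι i))
    have hxi : g (x i) ≠ none := by
      change x i ∈ pdom g
      exact hg ▸ mem_image_of_mem x self_mem_Iic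
    obtain ⟨f, hfF, hf, hfib⟩ :=
      hmod.exists_fiber_eq_singleton hκ hgF hy.symm (hto1 g hgF y₀) hxi
    exact ⟨f, hfF, hf.trans hg, hfib⟩
  choose f hfF hfdom hfib using hmarked
  have hlt : ∀ i j, j < i → ¬ Agree (f i) (f j) := by
    intro i j hji h
    have hi : f i (x j) ≠ none := by
      change x j ∈ pdom (f i)
      exact hfdom i ▸ mem_image_of_mem x hji.le
    have hj : f j (x j) = some y₀ := (hfib j _).2 rfl
    have : x j = x i := (hfib i _).1 ((h _ hi (hj ▸ Option.some_ne_none _)).trans hj)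
    exact hji.ne (x.injective this)
  have hpair : Pairwise fun i j => ¬ Agree (f i) (f j) := by
    intro i j hij
    rcases hij.lt_or_gt with h | h
    · exact fun ha => hlt j i h ha.symm
    · exact hlt i j h
  exact ⟨f, injective_of_pairwise_not_agree hpair, isAntichainIn_range hfF hpair⟩

theorem exists_injective_new_points_of_chain {ι : Type*} [LinearOrder ι] [SuccOrder ι]
    [NoMaxOrder ι] {c : ι → X → Option μ} (hc : ∀ i j, i < j → Ext (c j) (c i) ∧ c i ≠ c j) :
    ∃ (t : ι → X) (v : ι → μ), Injective t ∧ ∀ i j, i < j → c j (t i) = some (v i) := by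
  have hnew i := (hc i (succ i) (lt_succ i)).1.exists_new_point (hc i (succ i) (lt_succ i)).2
  choose t ht hti using hnew
  choose v hv using fun i => Option.ne_none_iff_exists'.mp (ht i)
  have htv : ∀ i j, i < j → c j (t i) = some (v i) := by
    intro i j hij
    rcases (succ_le_of_lt hij).eq_or_lt with h | h
    · exact h ▸ hv i
    · exact ((hc _ _ h).1 _ (ht i)).trans (hv i)
  refine ⟨t, v, Injective.of_lt_imp_ne fun i j hij he => ?_, htv⟩
  simpa [he, hti j] using htv i j hij

theorem exists_bounded_fiber {κ : Cardinal.{u}} (hκ : ℵ₀ ≤ κ) {ν : Type u} (hν : #ν ≤ κ)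
    (v : (succ κ).ord.ToType → ν) :
    ∃ y, ∃ T : Set (succ κ).ord.ToType, #T = κ ∧ (∀ i ∈ T, v i = y) ∧ ∃ j, ∀ i ∈ T, i < j := by
  have hcof : (succ κ).ord.cof = succ κ := (isRegular_succ hκ).cof_ord
  obtain ⟨y, hy⟩ := infinite_pigeonhole_card v (succ κ) (by simp) (hκ.trans (le_succ κ))
    (by rw [hcof]; exact hν.trans_lt (lt_succ κ))
  obtain ⟨T, hTy, hT⟩ := le_mk_iff_exists_subset.mp ((le_succ κ).trans hy)
  have hbdd : ¬ IsCofinal T := fun h =>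
    (cof_le h).not_gt (by rw [Ordinal.cof_toType, hcof, hT]; exact lt_succ κ)
  exact ⟨y, T, hT, fun i hi => hTy hi, not_isCofinal_iff.mp hbdd⟩

theorem not_hasChain_succ_ord {κ : Cardinal.{u}} (hκ : ℵ₀ ≤ κ) {ν : Type u} (hν : #ν ≤ κ)
    {F : Set (X → Option ν)} (hto1 : ∀ f ∈ F, SmallTo1 κ f) : ¬ HasChain (succ κ).ord F := by
  rintro ⟨c, hcF, hc⟩
  have := Cardinal.noMaxOrder (hκ.trans (le_succ κ))
  obtain ⟨t, v, ht, htv⟩ := exists_injective_new_points_of_chain hc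
  obtain ⟨y, T, hT, hTy, j, hTj⟩ := exists_bounded_fiber hκ hν v
  refine (hto1 _ (hcF j) y).not_ge ?_
  calc κ = #(t '' T) := hT.symm.trans (mk_image_eq ht).symm
    _ ≤ #{x | c j x = some y} := mk_le_mk_of_subset <| by
      rintro _ ⟨i, hi, rfl⟩
      exact (htv i j (hTj i hi)).trans (congrArg some (hTy i hi))

theorem stmt6_general {X : Type u} (κ : Cardinal.{u}) (hκ : κ.IsRegular)
    (hX : Order.succ κ ≤ #X)
    (F : Set (X → Option κ.ord.ToType)) (hF : IsForest (Order.succ κ) F)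
    (hto1 : ∀ f ∈ F, SmallTo1 κ f)
    (hmod : ClosedMod κ F) :
    (∃ A, IsAntichainIn F A ∧ #A = Order.succ κ) ∧
      ¬ HasChain (Order.succ κ).ord F := by
  have hℵ := hκ.aleph0_le
  refine ⟨?_, not_hasChain_succ_ord hℵ (mk_ord_toType κ).le hto1⟩
  have := Cardinal.noMaxOrder (hℵ.trans (le_succ κ))
  have : Nontrivial κ.ord.ToType := by
    rw [← one_lt_iff_nontrivial, mk_ord_toType]
    exact one_lt_aleph0.trans_le hℵ
  obtain ⟨x⟩ : Nonempty ((succ κ).ord.ToType ↪ X) := by rwa [← le_def, mk_ord_toType]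
  have hIic (i : (succ κ).ord.ToType) : #(Iic i) < succ κ := by
    rw [← Iio_succ]
    exact (mk_Iio_lt (succ i) (by simp)).trans_eq (mk_ord_toType _)
  obtain ⟨f, hf, hA⟩ := exists_antichain_of_embedding hℵ hF hmod hto1 x hIic
  exact ⟨range f, hA, by rw [mk_range_eq f hf, mk_ord_toType]⟩

/-- A coherent `(κ⁺,λ,κ)`-forest of `< κ`-to-1 functions, closed under `< κ`
modifications, has an antichain of size `κ⁺` (failure of the `κ⁺`-c.c.) and is
Aronszajn: it has no `⊆`-well-ordered chain of order type `κ⁺`. -/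
theorem stmt6 {X : Type u} (κ : Cardinal.{u}) (hκ : κ.IsRegular)
    (hX : Order.succ κ ≤ #X)
    (F : Set (X → Option κ.ord.ToType)) (hF : IsForest (Order.succ κ) F)
    (hcoh : Coherent κ F) (hto1 : ∀ f ∈ F, SmallTo1 κ f)
    (hmod : ClosedMod κ F) :
    (∃ A, IsAntichainIn F A ∧ #A = Order.succ κ) ∧
      ¬ HasChain (Order.succ κ).ord F :=
  stmt6_general κ hκ hX F hF hto1 hmod
end ForestPaper
end

section
/- Assume the P-ideal dichotomy. Let n < ω, λ ≥ ω₁, and let F be a coherent (ω₁, λ, n)-forest closed under finite modifications. Then F contains a ⊆-well-ordered chain of order type ω₁ (F is not Aronszajn). -/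
open Cardinal Set
open scoped Classical

universe u v

namespace ForestPaper

variable {X : Type u} {μ : Type v}

/-- `I` is a P-ideal on `Y`. -/
def IsPIdeal {Y : Type u} (I : Set (Set Y)) : Prop :=
  (∀ s : Set Y, s.Finite → s ∈ I) ∧
  (∀ s ∈ I, (s : Set Y).Countable) ∧
  (∀ s ∈ I, ∀ t : Set Y, t ⊆ s → t ∈ I) ∧
  (∀ s ∈ I, ∀ t ∈ I, s ∪ t ∈ I) ∧
  (∀ z : ℕ → Set Y, (∀ n, z n ∈ I) → ∃ w ∈ I, ∀ n, (z n \ w).Finite)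

/-- The P-ideal dichotomy. -/
def PIdealDichotomy : Prop :=
  ∀ (Y : Type u) (I : Set (Set Y)), IsPIdeal I →
    (∃ B : Set Y, ¬ B.Countable ∧ ∀ s : Set Y, s ⊆ B → s.Countable → s ∈ I) ∨
    (∃ P : ℕ → Set Y, (∀ y, ∃ n, y ∈ P n) ∧ ∀ n, ∀ s ∈ I, (s ∩ P n).Finite)

/-!
Apply the P-ideal dichotomy to the ideal of countable sets on which every member of `F` takes a
fixed value `v` only finitely often; coherence makes it a P-ideal. Either some uncountable set
is almost omitted by every member of `F` at `v`, or some uncountable `P` is orthogonal to the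
ideal, which forces every member of `F` to be almost constantly `v` on `P`. Since there are only
finitely many values, iterating the first alternative must end in the second. Then the
constant `v`-functions on the initial segments of an `ω₁`-enumeration of `P` lie in `F` by
closure under finite modifications, and form the required chain.
-/

lemma countable_iff_mk_lt_succ_aleph0 {α : Type*} {s : Set α} :
    s.Countable ↔ #s < Order.succ ℵ₀ := by
  rw [Order.lt_succ_iff, le_aleph0_iff_set_countable]

lemma pdom_pres_const (s : Set X) (v : μ) : pdom (pres (fun _ => some v) s) = s := by
  ext x
  by_cases hx : x ∈ s <;> simp [pdom, pres, hx]

lemma ext_pres_of_subset (g : X → Option μ) {s t : Set X} (h : s ⊆ t) :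
    Ext (pres g t) (pres g s) := by
  intro x hx
  by_cases hxs : x ∈ s
  · simp [pres, hxs, h hxs]
  · simp [pres, hxs] at hx

lemma mem_pdiff_of_eq_some {f g : X → Option μ} {x : X} {v : μ} (hf : f x = some v)
    (hg : x ∈ pdom g) (hgv : g x ≠ some v) : x ∈ pdiff f g :=
  ⟨by simp [hf], hg, fun h => hgv (h ▸ hf)⟩

section Forest

variable {F : Set (X → Option μ)}

lemma IsForest.countable_pdom (hF : IsForest (Order.succ ℵ₀) F) {f : X → Option μ}
    (hf : f ∈ F) : (pdom f).Countable :=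
  countable_iff_mk_lt_succ_aleph0.mpr (hF.dom_small f hf)

lemma IsForest.exists_pdom_eq (hF : IsForest (Order.succ ℵ₀) F) {s : Set X}
    (hs : s.Countable) : ∃ f ∈ F, pdom f = s :=
  hF.exists_dom s (countable_iff_mk_lt_succ_aleph0.mp hs)

lemma Coherent.finite_pdiff (hcoh : Coherent ℵ₀ F) {f g : X → Option μ} (hf : f ∈ F)
    (hg : g ∈ F) : (pdiff f g).Finite :=
  lt_aleph0_iff_set_finite.mp (hcoh f hf g hg)

def AlmostRangeIn (F : Set (X → Option μ)) (B : Set X) (V : Set μ) : Prop :=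
  ∀ f ∈ F, {x ∈ B | ∃ w ∉ V, f x = some w}.Finite

def IsAlmostConstOn (F : Set (X → Option μ)) (P : Set X) (v : μ) : Prop :=
  ∀ f ∈ F, {x ∈ P | x ∈ pdom f ∧ f x ≠ some v}.Finite

def omitIdeal (F : Set (X → Option μ)) (B : Set X) (v : μ) : Set (Set B) :=
  {s | s.Countable ∧ ∀ f ∈ F, {x ∈ s | f x = some v}.Finite}

lemma isPIdeal_omitIdeal (hF : IsForest (Order.succ ℵ₀) F) (hcoh : Coherent ℵ₀ F)
    (B : Set X) (v : μ) : IsPIdeal (omitIdeal F B v) := by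
  refine ⟨fun s hs => ⟨hs.countable, fun f _ => hs.subset (sep_subset _ _)⟩,
    fun s hs => hs.1,
    fun s hs t hts => ⟨hs.1.mono hts, fun f hf => (hs.2 f hf).subset fun x hx => ⟨hts hx.1, hx.2⟩⟩,
    fun s hs t ht => ⟨hs.1.union ht.1, fun f hf => ?_⟩, fun z hz => ?_⟩
  · exact ((hs.2 f hf).union (ht.2 f hf)).subset fun x ⟨hx, hfx⟩ =>
      hx.imp (⟨·, hfx⟩) (⟨·, hfx⟩)
  have hu : (⋃ k, z k).Countable := countable_iUnion fun k => (hz k).1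
  obtain ⟨g, hg, hgdom⟩ := hF.exists_pdom_eq (hu.image Subtype.val)
  -- The pseudo-union: where `g`, defined on all of `⋃ k, z k`, differs from `v`; by coherence
  -- every member of `F` takes the value `v` only finitely often there.
  refine ⟨{x ∈ ⋃ k, z k | g x ≠ some v}, ⟨hu.mono (sep_subset _ _), fun f hf => ?_⟩, fun k => ?_⟩
  · exact ((hcoh.finite_pdiff hf hg).preimage Subtype.val_injective.injOn).subset
      fun x ⟨⟨hxu, hgx⟩, hfx⟩ =>
        mem_pdiff_of_eq_some (x := x.1) hfx (hgdom ▸ mem_image_of_mem _ hxu) hgx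
  · exact ((hz k).2 g hg).subset fun x ⟨hxz, hxw⟩ =>
      ⟨hxz, not_not.mp fun hne => hxw ⟨mem_iUnion_of_mem k hxz, hne⟩⟩

lemma exists_omit_or_isAlmostConstOn (hPID : PIdealDichotomy.{u})
    (hF : IsForest (Order.succ ℵ₀) F) (hcoh : Coherent ℵ₀ F) {B : Set X} (hB : ¬ B.Countable)
    (v : μ) :
    (∃ B' ⊆ B, ¬ B'.Countable ∧ ∀ f ∈ F, {x ∈ B' | f x = some v}.Finite) ∨
      ∃ P ⊆ B, ¬ P.Countable ∧ IsAlmostConstOn F P v := by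
  rcases hPID B (omitIdeal F B v) (isPIdeal_omitIdeal hF hcoh B v) with
    ⟨C, hC, hCI⟩ | ⟨Q, hQ, hQI⟩
  · refine .inl ⟨Subtype.val '' C, Subtype.coe_image_subset B C,
      fun h => hC ((h.preimage Subtype.val_injective).mono (subset_preimage_image _ _)),
      fun f hf => ?_⟩
    have hs : {x ∈ C | f x = some v} ∈ omitIdeal F B v :=
      hCI _ (sep_subset _ _) (((hF.countable_pdom hf).preimage Subtype.val_injective).mono
        fun x hx => by simp [pdom, hx.2])
    exact ((hs.2 f hf).image Subtype.val).subset <| by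
      rintro _ ⟨⟨x, hxC, rfl⟩, hfx⟩
      exact ⟨x, ⟨⟨hxC, hfx⟩, hfx⟩, rfl⟩
  · obtain ⟨k, hk⟩ : ∃ k, ¬ (Subtype.val '' Q k).Countable := by
      by_contra! h
      refine hB ((countable_iUnion h).mono fun x hx => ?_)
      obtain ⟨k, hk⟩ := hQ ⟨x, hx⟩
      exact mem_iUnion_of_mem k ⟨_, hk, rfl⟩
    refine .inr ⟨_, Subtype.coe_image_subset B _, hk, fun f hf => ?_⟩
    have hs : {x : B | x.1 ∈ pdom f ∧ f x ≠ some v} ∈ omitIdeal F B v :=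
      ⟨((hF.countable_pdom hf).preimage Subtype.val_injective).mono fun x hx => hx.1,
        fun g hg => ((hcoh.finite_pdiff hg hf).preimage Subtype.val_injective.injOn).subset
          fun x ⟨⟨hxf, hfv⟩, hgx⟩ => mem_pdiff_of_eq_some (x := x.1) hgx hxf hfv⟩
    exact ((hQI k _ hs).image Subtype.val).subset <| by
      rintro _ ⟨⟨x, hxQ, rfl⟩, hx⟩
      exact ⟨x, ⟨hx, hxQ⟩, rfl⟩

lemma AlmostRangeIn.of_insert {B B' : Set X} {V : Set μ} {v : μ}
    (h : AlmostRangeIn F B (insert v V)) (hB' : B' ⊆ B)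
    (hv : ∀ f ∈ F, {x ∈ B' | f x = some v}.Finite) : AlmostRangeIn F B' V := fun f hf =>
  ((h f hf).union (hv f hf)).subset fun _ ⟨hx, w, hwV, hfx⟩ =>
    if hw : w = v then .inr ⟨hx, hw ▸ hfx⟩
    else .inl ⟨hB' hx, w, fun hw' => hw'.elim hw hwV, hfx⟩

lemma not_almostRangeIn_empty (hF : IsForest (Order.succ ℵ₀) F) {B : Set X}
    (hB : ¬ B.Countable) : ¬ AlmostRangeIn F B ∅ := by
  intro h
  have hBinf : B.Infinite := fun hfin => hB hfin.countable
  obtain ⟨b, hbB, hbc, hbinf⟩ := hBinf.exists_subset_countable_infinite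
  obtain ⟨f, hf, rfl⟩ := hF.exists_pdom_eq hbc
  refine hbinf ((h f hf).subset fun x hx => ⟨hbB hx, ?_⟩)
  obtain ⟨w, hw⟩ := Option.ne_none_iff_exists'.mp hx
  exact ⟨w, notMem_empty w, hw⟩

lemma exists_isAlmostConstOn_of_almostRangeIn (hPID : PIdealDichotomy.{u})
    (hF : IsForest (Order.succ ℵ₀) F) (hcoh : Coherent ℵ₀ F) {V : Set μ} (hV : V.Finite) :
    ∀ {B : Set X}, ¬ B.Countable → AlmostRangeIn F B V →
      ∃ (P : Set X) (v : μ), ¬ P.Countable ∧ IsAlmostConstOn F P v := by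
  induction V, hV using Set.Finite.induction_on with
  | empty => exact fun hB h => absurd h (not_almostRangeIn_empty hF hB)
  | @insert v V _ _ ih =>
    intro B hB h
    rcases exists_omit_or_isAlmostConstOn hPID hF hcoh hB v with
      ⟨B', hB'B, hB', hv⟩ | ⟨P, -, hP, hPv⟩
    · exact ih hB' (h.of_insert hB'B hv)
    · exact ⟨P, v, hP, hPv⟩

lemma exists_isAlmostConstOn [Finite μ] (hPID : PIdealDichotomy.{u})
    (hF : IsForest (Order.succ ℵ₀) F) (hcoh : Coherent ℵ₀ F) (hX : ¬ (univ : Set X).Countable) :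
    ∃ (P : Set X) (v : μ), ¬ P.Countable ∧ IsAlmostConstOn F P v :=
  exists_isAlmostConstOn_of_almostRangeIn hPID hF hcoh finite_univ hX fun f _ => by simp

lemma pres_const_mem (hF : IsForest (Order.succ ℵ₀) F) (hmod : ClosedMod ℵ₀ F) {P : Set X}
    {v : μ} (hP : IsAlmostConstOn F P v) {s : Set X} (hsP : s ⊆ P) (hs : s.Countable) :
    pres (fun _ => some v) s ∈ F := by
  obtain ⟨f, hf, rfl⟩ := hF.exists_pdom_eq hs
  refine hmod f hf _ (pdom_pres_const _ _)
    (lt_aleph0_iff_set_finite.mpr ((hP f hf).subset fun x hx => ?_))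
  by_cases hxs : x ∈ pdom f
  · exact ⟨hsP hxs, hxs, by simpa [pres, hxs] using hx⟩
  · simp [pres, hxs, show f x = none by simpa [pdom] using hxs] at hx

lemma hasChain_of_strictMono {o : Ordinal.{u}} {b : o.ToType → Set X} (hb : StrictMono b)
    (v : μ) (hF : ∀ i, pres (fun _ => some v) (b i) ∈ F) : HasChain o F :=
  ⟨fun i => pres (fun _ => some v) (b i), hF, fun _ _ hij =>
    ⟨ext_pres_of_subset _ (hb hij).subset,
      fun h => (hb hij).ne (by simpa only [pdom_pres_const] using congrArg pdom h)⟩⟩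

end Forest

lemma exists_strictMono_countable_subset {P : Set X} (hP : ¬ P.Countable) :
    ∃ b : (Order.succ ℵ₀ : Cardinal.{u}).ord.ToType → Set X,
      StrictMono b ∧ ∀ i, b i ⊆ P ∧ (b i).Countable := by
  obtain ⟨e⟩ : Nonempty ((Order.succ ℵ₀ : Cardinal.{u}).ord.ToType ↪ P) := by
    rw [← Cardinal.le_def, Cardinal.mk_toType, Cardinal.card_ord, Order.succ_le_iff]
    exact lt_of_not_ge fun h => hP (le_aleph0_iff_set_countable.mp h)
  refine ⟨fun i => (Subtype.val ∘ e) '' Iio i, ?_, fun i => ⟨?_, ?_⟩⟩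
  · exact (Subtype.val_injective.comp e.injective).image_strictMono.comp fun _ _ => Iio_ssubset_Iio
  · rintro _ ⟨j, -, rfl⟩
    exact (e j).2
  · exact (countable_iff_mk_lt_succ_aleph0.mpr (by simpa using mk_Iio_lt i)).image _

/-- Under PID, for any `n < ω`, a coherent `(ω₁,λ,n)`-forest closed under finite
modifications contains a `⊆`-well-ordered chain of order type `ω₁`. -/
theorem stmt11 {X : Type u} (hPID : PIdealDichotomy.{u}) (n : ℕ)
    (hX : Order.succ ℵ₀ ≤ #X)
    (F : Set (X → Option (ULift.{u} (Fin n)))) (hF : IsForest (Order.succ ℵ₀) F)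
    (hcoh : Coherent ℵ₀ F) (hmod : ClosedMod ℵ₀ F) :
    HasChain (Order.succ ℵ₀).ord F := by
  have hXunc : ¬ (univ : Set X).Countable := fun h =>
    (Order.succ_le_iff.mp hX).not_ge (mk_le_aleph0_iff.mpr (countable_univ_iff.mp h))
  obtain ⟨P, v, hP, hPv⟩ := exists_isAlmostConstOn hPID hF hcoh hXunc
  obtain ⟨b, hb, hbP⟩ := exists_strictMono_countable_subset hP
  exact hasChain_of_strictMono hb v fun i => pres_const_mem hF hmod hPv (hbP i).1 (hbP i).2
end ForestPaper
end

section
/- Let κ be a regular cardinal with 2^{<κ} = κ and let λ ≥ κ. The partial order ℙ consisting of partial functions p assigning, to fewer than κ many sets z ⊆ λ of size ≤ κ, a partial injective function from z into κ defined at fewer than κ points — ordered by p ≤ q iff dom(p) ⊇ dom(q), p(z) ⊇ q(z) for all z ∈ dom(q), and whenever z₀, z₁ ∈ dom(q) and α ∈ z₀ ∩ z₁ is outside dom(q(z₀)) ∪ dom(q(z₁)) but α ∈ dom(p(z₀)), then α ∈ dom(p(z₁)) and p(z₀)(α) = p(z₁)(α) — is a transitive ordering that is < κ-closed (every decreasing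 chain of length < κ has a lower bound) and has the κ⁺-chain condition. -/
open Cardinal Set
open scoped Classical

universe u v

namespace ForestPaper

variable {X : Type u} {μ : Type v}

/-- A condition of the forcing: `p` assigns to fewer than `κ` many sets `z ⊆ X`
of size `≤ κ` a partial injective function from `z` into `κ` defined at fewer
than `κ` points. -/
def CondOK {X : Type u} (κ : Cardinal.{u})
    (p : Set X → Option (X → Option κ.ord.ToType)) : Prop :=
  #{z | p z ≠ none} < κ ∧
  ∀ z f, p z = some f → #z ≤ κ ∧ pdom f ⊆ z ∧ #(pdom f) < κ ∧ PInj f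

/-- The ordering of the forcing of Theorem (injections): `p ≤ q` iff the domain
of `p` contains that of `q`, `p(z)` extends `q(z)` for `z ∈ dom q`, and for
`z₀, z₁ ∈ dom q` and `α ∈ z₀ ∩ z₁` outside `dom q(z₀) ∪ dom q(z₁)`, if `p(z₀)`
is defined at `α` then so is `p(z₁)`, with the same value. -/
def CondLE {X K : Type u} (p q : Set X → Option (X → Option K)) : Prop :=
  (∀ z, q z ≠ none → p z ≠ none) ∧
  (∀ z f g, p z = some f → q z = some g → Ext f g) ∧
  (∀ z₀ z₁ g₀ g₁ f₀ f₁ α, q z₀ = some g₀ → q z₁ = some g₁ →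
    α ∈ z₀ → α ∈ z₁ → g₀ α = none → g₁ α = none →
    p z₀ = some f₀ → p z₁ = some f₁ → f₀ α ≠ none → f₁ α = f₀ α)

/-!
Lower bounds of chains are obtained by taking unions set by set. For the chain condition, the
key point is that two conditions assigning the same function to every set they both decide are
compatible: their union is a common extension. Given more than `κ` conditions, use `2^{<κ} = κ`
and the regularity of `κ` to close under a Skolem function: a subfamily `B` of size `≤ κ`
containing, for every condition `d` deciding only sets decided by members of `B`, a member of the
family extending `d` whenever one exists. Any condition `p` outside `B`, restricted to the sets
decided by `B`, is such a `d`; the member of `B` extending it then agrees with `p`.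
-/

section PartialFunction

theorem ext_refl (f : X → Option μ) : Ext f f := fun _ _ => rfl

theorem Ext.trans {f g h : X → Option μ} (hfg : Ext f g) (hgh : Ext g h) : Ext f h :=
  fun x hx => (hfg x (by rwa [hgh x hx])).trans (hgh x hx)

theorem Ext.pdom_subset {f g : X → Option μ} (h : Ext f g) : pdom g ⊆ pdom f := fun x hx => by
  change f x ≠ none
  rwa [h x hx]

theorem pres_of_mem {f : X → Option μ} {s : Set X} {x : X} (hx : x ∈ s) : pres f s x = f x :=
  if_pos hx

theorem pdom_pres_subset (f : X → Option μ) (s : Set X) : pdom (pres f s) ⊆ s := by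
  intro x hx
  by_contra h
  exact hx (if_neg h)

theorem ext_pres (f : X → Option μ) (s : Set X) : Ext f (pres f s) :=
  fun _ hx => (pres_of_mem (pdom_pres_subset f s hx)).symm

/-- The union of a family of partial functions; it picks arbitrarily among the values of the
`f i` at `x` unless these agree. -/
noncomputable def pUnion {ι : Sort*} (f : ι → X → Option μ) : X → Option μ := fun x =>
  if h : ∃ i, f i x ≠ none then f h.choose x else none

theorem exists_pUnion_eq {ι : Sort*} {f : ι → X → Option μ} {x : X} (hx : pUnion f x ≠ none) :
    ∃ i, f i x ≠ none ∧ pUnion f x = f i x := by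
  by_cases h : ∃ i, f i x ≠ none
  · exact ⟨h.choose, h.choose_spec, dif_pos h⟩
  · exact absurd (dif_neg h) hx

theorem pdom_pUnion_subset {ι : Sort*} (f : ι → X → Option μ) :
    pdom (pUnion f) ⊆ ⋃ i, pdom (f i) := fun x hx => by
  obtain ⟨i, hi, -⟩ := exists_pUnion_eq hx
  exact mem_iUnion.2 ⟨i, hi⟩

variable {ι : Type*} [LinearOrder ι] {f : ι → X → Option μ}

theorem ext_pUnion (hf : ∀ i j, i ≤ j → Ext (f j) (f i)) (i : ι) : Ext (pUnion f) (f i) := by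
  intro x hx
  have h : ∃ i, f i x ≠ none := ⟨i, hx⟩
  rw [pUnion, dif_pos h, ← hf _ _ (le_max_right i h.choose) x h.choose_spec,
    hf _ _ (le_max_left _ _) x hx]

theorem pinj_pUnion (hf : ∀ i j, i ≤ j → Ext (f j) (f i)) (hinj : ∀ i, PInj (f i)) :
    PInj (pUnion f) := by
  intro x y hx hxy
  obtain ⟨i, hix, hi⟩ := exists_pUnion_eq hx
  obtain ⟨j, hjy, hj⟩ := exists_pUnion_eq (hxy ▸ hx)
  refine hinj (max i j) x y ((hf _ _ (le_max_left i j) x hix).symm ▸ hix) ?_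
  rw [hf _ _ (le_max_left i j) x hix, hf _ _ (le_max_right i j) y hjy, ← hi, ← hj, hxy]

end PartialFunction

section Cardinal

variable {κ : Cardinal.{u}}

theorem mk_iUnion_le_of_le (hκ : ℵ₀ ≤ κ) {ι α : Type u} {f : ι → Set α} (hι : #ι ≤ κ)
    (hf : ∀ i, #(f i) ≤ κ) : #(⋃ i, f i) ≤ κ :=
  (mk_iUnion_le f).trans <| (mul_le_mul' hι (ciSup_le' hf)).trans (mul_eq_self hκ).le

theorem exists_forall_lt_of_mk_lt (hκ : κ.IsRegular) {s : Set κ.ord.ToType} (hs : #s < κ) :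
    ∃ b, ∀ a ∈ s, a < b := by
  by_contra! h
  have hcof := Order.cof_le (s := s) h
  rw [Ordinal.cof_toType, hκ.cof_ord] at hcof
  exact hcof.not_gt hs

theorem mk_setOf_subset_mk_lt_le (hκ : κ.IsRegular) (hpow : (2 : Cardinal.{u}) ^< κ = κ)
    {α : Type u} {Y : Set α} (hY : #Y ≤ κ) : #{s : Set α | s ⊆ Y ∧ #s < κ} ≤ κ := by
  obtain ⟨e⟩ : Nonempty (Y ↪ κ.ord.ToType) := by
    rwa [← Cardinal.le_def, mk_toType, card_ord]
  have hbdd : {t : Set κ.ord.ToType | #t < κ} ⊆ ⋃ b, 𝒫 (Iio b) := fun t ht =>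
    mem_iUnion.2 (exists_forall_lt_of_mk_lt hκ ht)
  have hK : #{t : Set κ.ord.ToType | #t < κ} ≤ κ := by
    refine (mk_le_mk_of_subset hbdd).trans (mk_iUnion_le_of_le hκ.aleph0_le ?_ fun b => ?_)
    · rw [mk_toType, card_ord]
    · rw [mk_powerset]
      exact (le_powerlt 2 (by simpa using mk_Iio_lt b (by simp))).trans hpow.le
  let g : {s : Set α | s ⊆ Y ∧ #s < κ} → {t : Set κ.ord.ToType | #t < κ} := fun s =>
    ⟨e '' (Subtype.val ⁻¹' s.1),
      mk_image_le.trans_lt ((mk_preimage_of_injective _ _ Subtype.val_injective).trans_lt s.2.2)⟩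
  refine (mk_le_of_injective (f := g) fun s t hst => Subtype.ext ?_).trans hK
  have h := image_injective.2 e.injective (congrArg Subtype.val hst)
  rwa [Subtype.preimage_coe_eq_preimage_coe_iff, inter_eq_right.2 s.2.1,
    inter_eq_right.2 t.2.1] at h

def pgraph {α β : Type*} (f : α → Option β) : Set (α × β) := {xy | f xy.1 = some xy.2}

theorem pgraph_injective {α β : Type*} : Function.Injective (pgraph : (α → Option β) → _) :=
  fun _ _ h => funext fun x => Option.ext fun y => Set.ext_iff.1 h (x, y)

theorem mk_pgraph_le {α β : Type u} (f : α → Option β) : #(pgraph f) ≤ #(pdom f) := by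
  have hinj : InjOn Prod.fst (pgraph f) := fun xy hxy xy' hxy' h =>
    Prod.ext h (Option.some.inj (hxy.symm.trans (h ▸ hxy')))
  rw [← mk_image_eq_of_injOn _ _ hinj]
  refine mk_le_mk_of_subset ?_
  rintro _ ⟨xy, hxy, rfl⟩
  exact fun h => by simp [pgraph, h] at hxy

theorem mk_pfun_le (hκ : κ.IsRegular) (hpow : (2 : Cardinal.{u}) ^< κ = κ) {α β : Type u}
    {Y : Set α} {V : Set β} (hY : #Y ≤ κ) (hV : #V ≤ κ) :
    #{f : α → Option β | pdom f ⊆ Y ∧ #(pdom f) < κ ∧ pran f ⊆ V} ≤ κ := by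
  have hYV : #(Y ×ˢ V) ≤ κ := by
    rw [mk_setProd]
    exact (mul_le_mul' hY hV).trans (mul_eq_self hκ.aleph0_le).le
  rw [← mk_image_eq pgraph_injective]
  refine (mk_le_mk_of_subset ?_).trans (mk_setOf_subset_mk_lt_le hκ hpow hYV)
  rintro _ ⟨f, ⟨hfY, hfκ, hfV⟩, rfl⟩
  refine ⟨fun xy hxy => ⟨hfY ?_, hfV ⟨xy.1, hxy⟩⟩, (mk_pgraph_le f).trans_lt hfκ⟩
  exact fun h => by simp [pgraph, h] at hxy

theorem exists_subset_mk_le_subset_biUnion {ι α : Type u} {s : Set α} {I : Set ι}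
    {t : ι → Set α} (h : s ⊆ ⋃ i ∈ I, t i) : ∃ J ⊆ I, #J ≤ #s ∧ s ⊆ ⋃ i ∈ J, t i := by
  choose idx hidx hmem using fun x : s => mem_iUnion₂.1 (h x.2)
  exact ⟨range idx, range_subset_iff.2 hidx, mk_range_le,
    fun x hx => mem_iUnion₂.2 ⟨idx ⟨x, hx⟩, mem_range_self _, hmem ⟨x, hx⟩⟩⟩

theorem exists_isFixedPt_mk_le (hκ : κ.IsRegular) {α : Type u} {F : Set α → Set α}
    (hmono : Monotone F) (hcard : ∀ S : Set α, #S ≤ κ → #(F S) ≤ κ)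
    (hsmall : ∀ S, ∀ a ∈ F S, ∃ T ⊆ S, #T < κ ∧ a ∈ F T) :
    ∃ B, Function.IsFixedPt F B ∧ #B ≤ κ := by
  have hK : #κ.ord.ToType ≤ κ := by rw [mk_toType, card_ord]
  -- Indexing the stages by `κ` lets regularity put every small subset of their union in one stage.
  let stage : κ.ord.ToType → Set α :=
    WellFoundedLT.fix fun i prev => F (⋃ j : Iio i, prev j j.2)
  have stage_eq (i) : stage i = F (⋃ j : Iio i, stage j) := WellFoundedLT.fix_eq _ i
  have mk_stage (i) : #(stage i) ≤ κ := by
    induction i using WellFoundedLT.induction with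
    | _ i ih =>
      rw [stage_eq]
      exact hcard _ (mk_iUnion_le_of_le hκ.aleph0_le ((mk_set_le _).trans hK) fun j => ih j j.2)
  refine ⟨⋃ i, stage i, subset_antisymm (fun a ha => ?_) (iUnion_subset fun i => ?_),
    mk_iUnion_le_of_le hκ.aleph0_le hK mk_stage⟩
  · obtain ⟨T, hTB, hT, haT⟩ := hsmall _ a ha
    choose idx hidx using fun x : T => mem_iUnion.1 (hTB x.2)
    obtain ⟨b, hb⟩ := exists_forall_lt_of_mk_lt hκ (mk_range_le.trans_lt hT : #(range idx) < κ)
    refine mem_iUnion.2 ⟨b, (stage_eq b).symm ▸ hmono (fun x hx => ?_) haT⟩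
    exact mem_iUnion.2 ⟨⟨idx ⟨x, hx⟩, hb _ (mem_range_self _)⟩, hidx ⟨x, hx⟩⟩
  · exact (stage_eq i).trans_subset (hmono (iUnion_subset fun j => subset_iUnion stage j))

end Cardinal

section Order

variable {K : Type u}

/-- The partial function assigned by `p` to `z`, taken to be empty where `p` is undefined. -/
def localFn (p : Set X → Option (X → Option K)) (z : Set X) : X → Option K :=
  (p z).getD fun _ => none

theorem localFn_of_eq_some {p : Set X → Option (X → Option K)} {z : Set X} {f : X → Option K}
    (h : p z = some f) : localFn p z = f := by
  simp [localFn, h]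

theorem localFn_of_eq_none {p : Set X → Option (X → Option K)} {z : Set X} (h : p z = none)
    (x : X) : localFn p z x = none := by
  simp [localFn, h]

theorem condLE_iff {p q : Set X → Option (X → Option K)} :
    CondLE p q ↔ pdom q ⊆ pdom p ∧ (∀ z, Ext (localFn p z) (localFn q z)) ∧
      ∀ z₀ ∈ pdom q, ∀ z₁ ∈ pdom q, ∀ α ∈ z₀ ∩ z₁, localFn q z₀ α = none →
        localFn q z₁ α = none → localFn p z₀ α ≠ none → localFn p z₁ α = localFn p z₀ α := by
  constructor
  · rintro ⟨hdom, hext, hnew⟩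
    refine ⟨fun z hz => hdom z hz, fun z x hx => ?_, fun z₀ hz₀ z₁ hz₁ α hα h₀ h₁ hp => ?_⟩
    · cases hqz : q z with
      | none => exact absurd (localFn_of_eq_none hqz x) hx
      | some g =>
        obtain ⟨f, hpz⟩ := Option.ne_none_iff_exists'.1 (hdom z (by simp [hqz]))
        rw [localFn_of_eq_some hqz] at hx ⊢
        rw [localFn_of_eq_some hpz]
        exact hext z f g hpz hqz x hx
    · obtain ⟨g₀, hq₀⟩ := Option.ne_none_iff_exists'.1 hz₀
      obtain ⟨g₁, hq₁⟩ := Option.ne_none_iff_exists'.1 hz₁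
      obtain ⟨f₀, hp₀⟩ := Option.ne_none_iff_exists'.1 (hdom z₀ hz₀)
      obtain ⟨f₁, hp₁⟩ := Option.ne_none_iff_exists'.1 (hdom z₁ hz₁)
      rw [localFn_of_eq_some hq₀] at h₀
      rw [localFn_of_eq_some hq₁] at h₁
      rw [localFn_of_eq_some hp₀] at hp ⊢
      rw [localFn_of_eq_some hp₁]
      exact hnew z₀ z₁ g₀ g₁ f₀ f₁ α hq₀ hq₁ hα.1 hα.2 h₀ h₁ hp₀ hp₁ hp
  · rintro ⟨hdom, hext, hnew⟩
    refine ⟨hdom, fun z f g hpz hqz => ?_,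
      fun z₀ z₁ g₀ g₁ f₀ f₁ α hq₀ hq₁ hα₀ hα₁ h₀ h₁ hp₀ hp₁ hp => ?_⟩
    · simpa only [localFn_of_eq_some hpz, localFn_of_eq_some hqz] using hext z
    · have := hnew z₀ (by simp [pdom, hq₀]) z₁ (by simp [pdom, hq₁]) α ⟨hα₀, hα₁⟩
      simp only [localFn_of_eq_some hq₀, localFn_of_eq_some hq₁, localFn_of_eq_some hp₀,
        localFn_of_eq_some hp₁] at this
      exact this h₀ h₁ hp

theorem condLE_trans {p q r : Set X → Option (X → Option K)} (hpq : CondLE p q)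
    (hqr : CondLE q r) : CondLE p r := by
  obtain ⟨hdom, hext, hnew⟩ := condLE_iff.1 hpq
  obtain ⟨hdom', hext', hnew'⟩ := condLE_iff.1 hqr
  refine condLE_iff.2 ⟨hdom'.trans hdom, fun z => (hext z).trans (hext' z),
    fun z₀ hz₀ z₁ hz₁ α hα h₀ h₁ hp => ?_⟩
  by_cases hq₀ : localFn q z₀ α = none
  · by_cases hq₁ : localFn q z₁ α = none
    · exact hnew z₀ (hdom' hz₀) z₁ (hdom' hz₁) α hα hq₀ hq₁ hp
    · have := hnew' z₁ hz₁ z₀ hz₀ α ⟨hα.2, hα.1⟩ h₁ h₀ hq₁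
      exact absurd (this.symm.trans hq₀) hq₁
  · rw [hext z₁ α (hnew' z₀ hz₀ z₁ hz₁ α hα h₀ h₁ hq₀ ▸ hq₀), hext z₀ α hq₀,
      hnew' z₀ hz₀ z₁ hz₁ α hα h₀ h₁ hq₀]

theorem condLE_of_ext {p q : Set X → Option (X → Option K)} (h : Ext p q) : CondLE p q := by
  have hloc : ∀ z ∈ pdom q, localFn p z = localFn q z := fun z hz => by
    obtain ⟨g, hg⟩ := Option.ne_none_iff_exists'.1 hz
    rw [localFn_of_eq_some hg, localFn_of_eq_some ((h z hz).trans hg)]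
  refine condLE_iff.2 ⟨h.pdom_subset, fun z x hx => ?_, fun z₀ hz₀ _ _ α _ h₀ _ hp => ?_⟩
  · by_cases hz : z ∈ pdom q
    · rw [hloc z hz]
    · exact absurd (localFn_of_eq_none (not_not.1 hz) x) hx
  · exact absurd (hloc z₀ hz₀ ▸ h₀) hp

section Chain

variable {ι : Type*} (c : ι → Set X → Option (X → Option K))

noncomputable def chainLimit : Set X → Option (X → Option K) := fun z =>
  if z ∈ ⋃ i, pdom (c i) then some (pUnion fun i => localFn (c i) z) else none

theorem pdom_chainLimit : pdom (chainLimit c) = ⋃ i, pdom (c i) := by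
  ext z
  simp [chainLimit, pdom]

theorem localFn_chainLimit {z : Set X} (hz : z ∈ ⋃ i, pdom (c i)) :
    localFn (chainLimit c) z = pUnion fun i => localFn (c i) z :=
  localFn_of_eq_some (if_pos hz)

variable [LinearOrder ι] {c}

theorem ext_localFn_of_chain (hmono : ∀ i j, i < j → CondLE (c j) (c i)) (z : Set X)
    (i j : ι) (hij : i ≤ j) : Ext (localFn (c j) z) (localFn (c i) z) := by
  rcases hij.eq_or_lt with rfl | hlt
  exacts [ext_refl _, (condLE_iff.1 (hmono i j hlt)).2.1 z]

theorem chainLimit_condLE (hmono : ∀ i j, i < j → CondLE (c j) (c i)) (i : ι) :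
    CondLE (chainLimit c) (c i) := by
  have hD {z} (hz : z ∈ pdom (c i)) : z ∈ ⋃ i, pdom (c i) := mem_iUnion.2 ⟨i, hz⟩
  refine condLE_iff.2 ⟨pdom_chainLimit c ▸ subset_iUnion (fun i => pdom (c i)) i,
    fun z x hx => ?_, fun z₀ hz₀ z₁ hz₁ α hα h₀ h₁ hα₀ => ?_⟩
  · have hz : z ∈ pdom (c i) := fun hcz => hx (localFn_of_eq_none hcz x)
    rw [localFn_chainLimit c (hD hz)]
    exact ext_pUnion (ext_localFn_of_chain hmono z) i x hx
  · rw [localFn_chainLimit c (hD hz₀)] at hα₀ ⊢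
    rw [localFn_chainLimit c (hD hz₁)]
    obtain ⟨j, hjα, hj⟩ := exists_pUnion_eq hα₀
    -- `α` is new at `z₀` only after stage `i`, and then `c j ≤ c i` forces it at `z₁` too.
    have hij : i < j := lt_of_not_ge fun hji =>
      hjα (ext_localFn_of_chain hmono z₀ j i hji α hjα ▸ h₀)
    have hc₁ := (condLE_iff.1 (hmono i j hij)).2.2 z₀ hz₀ z₁ hz₁ α hα h₀ h₁ hjα
    rw [hj, ext_pUnion (ext_localFn_of_chain hmono z₁) j α (hc₁ ▸ hjα), hc₁]

end Chain

end Order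

section Conditions

variable {κ : Cardinal.{u}} {p q : Set X → Option (X → Option κ.ord.ToType)}

theorem CondOK.mk_le (hp : CondOK κ p) {z : Set X} (hz : z ∈ pdom p) : #z ≤ κ := by
  obtain ⟨f, hf⟩ := Option.ne_none_iff_exists'.1 hz
  exact (hp.2 z f hf).1

theorem CondOK.pdom_localFn_subset (hp : CondOK κ p) (z : Set X) : pdom (localFn p z) ⊆ z := by
  cases hz : p z with
  | none => exact fun x hx => absurd (localFn_of_eq_none hz x) hx
  | some f => exact localFn_of_eq_some hz ▸ (hp.2 z f hz).2.1

theorem CondOK.mk_pdom_localFn_lt (hp : CondOK κ p) (z : Set X) :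
    #(pdom (localFn p z)) < κ := by
  cases hz : p z with
  | none =>
    have hempty : pdom (localFn p z) = ∅ :=
      eq_empty_of_forall_notMem fun x hx => hx (localFn_of_eq_none hz x)
    rw [hempty]
    simpa using zero_le.trans_lt hp.1
  | some f => exact localFn_of_eq_some hz ▸ (hp.2 z f hz).2.2.1

theorem CondOK.pinj_localFn (hp : CondOK κ p) (z : Set X) : PInj (localFn p z) := by
  cases hz : p z with
  | none => exact fun x _ hx => absurd (localFn_of_eq_none hz x) hx
  | some f => exact localFn_of_eq_some hz ▸ (hp.2 z f hz).2.2.2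

theorem CondOK.of_ext (hp : CondOK κ p) (h : Ext p q) : CondOK κ q :=
  ⟨(mk_le_mk_of_subset h.pdom_subset).trans_lt hp.1,
    fun z f hf => hp.2 z f ((h z (by simp [hf])).trans hf)⟩

theorem exists_condLE_of_agree (hκ : ℵ₀ ≤ κ) (hp : CondOK κ p) (hq : CondOK κ q)
    (h : Agree p q) : ∃ r, CondOK κ r ∧ CondLE r p ∧ CondLE r q := by
  refine ⟨fun z => (p z).or (q z), ⟨?_, fun z f hf => ?_⟩, condLE_of_ext fun z hz => ?_,
    condLE_of_ext fun z hz => ?_⟩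
  · have hdom : {z | (p z).or (q z) ≠ none} ⊆ pdom p ∪ pdom q := fun z hz => by
      by_contra h'
      simp_all [pdom]
    exact (mk_le_mk_of_subset hdom).trans_lt
      ((mk_union_le _ _).trans_lt (add_lt_of_lt hκ hp.1 hq.1))
  · rcases Option.or_eq_some_iff.1 hf with hpz | ⟨-, hqz⟩
    exacts [hp.2 z f hpz, hq.2 z f hqz]
  · obtain ⟨f, hf⟩ := Option.ne_none_iff_exists'.1 hz
    simp [hf]
  · by_cases hpz : p z = none
    · simp [hpz]
    · obtain ⟨f, hf⟩ := Option.ne_none_iff_exists'.1 hpz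
      simp [hf, ← h z hpz hz]

theorem condOK_chainLimit {ι : Type u} [LinearOrder ι]
    {c : ι → Set X → Option (X → Option κ.ord.ToType)}
    (hmono : ∀ i j, i < j → CondLE (c j) (c i)) (hκ : κ.IsRegular) (hι : #ι < κ)
    (hc : ∀ i, CondOK κ (c i)) : CondOK κ (chainLimit c) := by
  refine ⟨?_, fun z f hf => ?_⟩
  · change #(pdom (chainLimit c)) < κ
    rw [pdom_chainLimit]
    exact (card_iUnion_lt_iff_forall_of_isRegular hκ hι).2 fun i => (hc i).1
  · have hz : z ∈ ⋃ i, pdom (c i) :=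
      pdom_chainLimit c ▸ show chainLimit c z ≠ none by simp [hf]
    obtain rfl := (localFn_of_eq_some hf).symm.trans (localFn_chainLimit c hz)
    obtain ⟨i, hi⟩ := mem_iUnion.1 hz
    refine ⟨(hc i).mk_le hi, (pdom_pUnion_subset _).trans (iUnion_subset fun j =>
      (hc j).pdom_localFn_subset z), ?_,
      pinj_pUnion (ext_localFn_of_chain hmono z) fun j => (hc j).pinj_localFn z⟩
    exact (mk_le_mk_of_subset (pdom_pUnion_subset _)).trans_lt
      ((card_iUnion_lt_iff_forall_of_isRegular hκ hι).2 fun j => (hc j).mk_pdom_localFn_lt z)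

end Conditions

section ChainCondition

variable {κ : Cardinal.{u}}

theorem mk_setOf_condOK_pdom_subset_le (hκ : κ.IsRegular) (hpow : (2 : Cardinal.{u}) ^< κ = κ)
    {Z : Set (Set X)} (hZ : #Z ≤ κ) (hZκ : ∀ z ∈ Z, #z ≤ κ) :
    #{d : Set X → Option (X → Option κ.ord.ToType) | CondOK κ d ∧ pdom d ⊆ Z} ≤ κ := by
  have hY : #(⋃₀ Z) ≤ κ := by
    rw [sUnion_eq_iUnion]
    exact mk_iUnion_le_of_le hκ.aleph0_le hZ fun z => hZκ z z.2
  have hK : #(univ : Set κ.ord.ToType) ≤ κ := by rw [mk_univ, mk_toType, card_ord]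
  refine (mk_le_mk_of_subset ?_).trans (mk_pfun_le hκ hpow hZ (mk_pfun_le hκ hpow hY hK))
  rintro d ⟨hd, hdZ⟩
  refine ⟨hdZ, hd.1, ?_⟩
  rintro f ⟨z, hz⟩
  obtain ⟨-, hfz, hfκ, -⟩ := hd.2 z f hz
  exact ⟨hfz.trans (subset_sUnion_of_mem (hdZ (by simp [pdom, hz]))), hfκ, subset_univ _⟩

theorem exists_ne_agree_of_lt_mk (hκ : κ.IsRegular) (hpow : (2 : Cardinal.{u}) ^< κ = κ)
    {A : Set {p : Set X → Option (X → Option κ.ord.ToType) // CondOK κ p}} (hA : κ < #A) :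
    ∃ p ∈ A, ∃ q ∈ A, p ≠ q ∧ Agree p.1 q.1 := by
  obtain ⟨a₀, ha₀⟩ : A.Nonempty := nonempty_iff_ne_empty.2 fun h => by simp [h] at hA
  have hwit (d) : ∃ q ∈ A, (∃ p ∈ A, Ext p.1 d) → Ext q.1 d := by
    by_cases h : ∃ p ∈ A, Ext p.1 d
    · obtain ⟨p, hp, hpd⟩ := h
      exact ⟨p, hp, fun _ => hpd⟩
    · exact ⟨a₀, ha₀, fun h' => absurd h' h⟩
  choose w hwA hw using hwit
  let decided (S : Set {p // CondOK κ p}) : Set (Set X) := ⋃ q ∈ S, pdom q.1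
  let F (S : Set {p // CondOK κ p}) := w '' {d | CondOK κ d ∧ pdom d ⊆ decided S}
  have hmono : Monotone F := fun S T hST =>
    image_mono fun d hd => ⟨hd.1, hd.2.trans (biUnion_subset_biUnion_left hST)⟩
  have hcard (S : Set {p // CondOK κ p}) (hS : #S ≤ κ) : #(F S) ≤ κ := by
    refine mk_image_le.trans (mk_setOf_condOK_pdom_subset_le hκ hpow ?_ ?_)
    · rw [show decided S = _ from biUnion_eq_iUnion _ _]
      exact mk_iUnion_le_of_le hκ.aleph0_le hS fun q => q.1.2.1.le
    · intro z hz
      obtain ⟨q, -, hzq⟩ := mem_iUnion₂.1 hz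
      exact q.2.mk_le hzq
  have hsmall (S) : ∀ a ∈ F S, ∃ T ⊆ S, #T < κ ∧ a ∈ F T := by
    rintro _ ⟨d, ⟨hd, hdS⟩, rfl⟩
    obtain ⟨T, hTS, hT, hdT⟩ := exists_subset_mk_le_subset_biUnion hdS
    exact ⟨T, hTS, hT.trans_lt hd.1, d, ⟨hd, hdT⟩, rfl⟩
  obtain ⟨B, hFB, hB⟩ := exists_isFixedPt_mk_le hκ hmono hcard hsmall
  obtain ⟨p, hpA, hpB⟩ : ∃ p ∈ A, p ∉ B :=
    not_subset.1 fun hAB => ((mk_le_mk_of_subset hAB).trans hB).not_gt hA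
  let d := pres p.1 (decided B)
  have hqB : w d ∈ B := hFB ▸ mem_image_of_mem w ⟨p.2.of_ext (ext_pres _ _), pdom_pres_subset _ _⟩
  refine ⟨p, hpA, w d, hwA d, fun h => hpB (h ▸ hqB), fun z hpz hqz => ?_⟩
  have hzB : z ∈ decided B := mem_iUnion₂.2 ⟨w d, hqB, hqz⟩
  have hdz : d z = p.1 z := pres_of_mem hzB
  rw [hw d ⟨p, hpA, ext_pres _ _⟩ z (hdz ▸ hpz), hdz]

end ChainCondition

theorem stmt14_general {X : Type u} (κ : Cardinal.{u}) (hκ : κ.IsRegular)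
    (hpow : (2 : Cardinal.{u}) ^< κ = κ) :
    (∀ p q r : Set X → Option (X → Option κ.ord.ToType),
      CondOK κ p → CondOK κ q → CondOK κ r →
      CondLE p q → CondLE q r → CondLE p r) ∧
    (∀ δ : Ordinal.{u}, δ < κ.ord →
      ∀ c : δ.ToType → {p : Set X → Option (X → Option κ.ord.ToType) // CondOK κ p},
        (∀ i j, i < j → CondLE (c j).1 (c i).1) →
        ∃ p, CondOK κ p ∧ ∀ i, CondLE p (c i).1) ∧
    (∀ A : Set {p : Set X → Option (X → Option κ.ord.ToType) // CondOK κ p},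
      (∀ p ∈ A, ∀ q ∈ A, p ≠ q →
        ¬ ∃ r, CondOK κ r ∧ CondLE r p.1 ∧ CondLE r q.1) → #A ≤ κ) := by
  refine ⟨fun _ _ _ _ _ _ => condLE_trans, fun δ hδ c hc => ?_, fun A hA => ?_⟩
  · have hδκ : #δ.ToType < κ := by rwa [mk_toType, ← lt_ord]
    exact ⟨chainLimit _, condOK_chainLimit hc hκ hδκ fun i => (c i).2, chainLimit_condLE hc⟩
  · by_contra! hlt
    obtain ⟨p, hp, q, hq, hne, hpq⟩ := exists_ne_agree_of_lt_mk hκ hpow hlt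
    exact hA p hp q hq hne (exists_condLE_of_agree hκ.aleph0_le p.2 q.2 hpq)

/-- The forcing of partial local injections is transitively ordered, `< κ`-closed,
and has the `κ⁺`-chain condition. -/
theorem stmt14 {X : Type u} (κ : Cardinal.{u}) (hκ : κ.IsRegular)
    (hpow : (2 : Cardinal.{u}) ^< κ = κ) (hX : κ ≤ #X) :
    (∀ p q r : Set X → Option (X → Option κ.ord.ToType),
      CondOK κ p → CondOK κ q → CondOK κ r →
      CondLE p q → CondLE q r → CondLE p r) ∧
    (∀ δ : Ordinal.{u}, δ < κ.ord →
      ∀ c : δ.ToType → {p : Set X → Option (X → Option κ.ord.ToType) // CondOK κ p},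
        (∀ i j, i < j → CondLE (c j).1 (c i).1) →
        ∃ p, CondOK κ p ∧ ∀ i, CondLE p (c i).1) ∧
    (∀ A : Set {p : Set X → Option (X → Option κ.ord.ToType) // CondOK κ p},
      (∀ p ∈ A, ∀ q ∈ A, p ≠ q →
        ¬ ∃ r, CondOK κ r ∧ CondLE r p.1 ∧ CondLE r q.1) → #A ≤ κ) :=
  stmt14_general κ hκ hpow
end ForestPaper
end
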